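/- arXiv:math/0202301 — 2 statements merged into one kernel-verified Lean document; each statement's English description precedes it below -/
import Mathlib

section
/- Let s ∈ GL(h) be a complex reflection with eigenvector α_s of eigenvalue ζ_s ≠ 1, λ_s = 1 − ζ_s, and dual eigenvector α_s^∨ ∈ h* (with eigenvalue ≠ 1 for the contragredient action, so α_s^∨(α_s) ≠ 0). Then there exists a unique ℂ-linear map D_s : Sym(h) → Sym(h) such that D_s(1) = 0, D_s(x) = α_s^∨(x)·1 for every x ∈ h ⊂ Sym(h), and D_s(pq) = D_s(p)·q + p·D_s(q) − (λ_s/α_s^∨(α_s))·D_s(p)·D_s(q)·α_s for all p, q ∈ Sym(h). -/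
noncomputable section

/-- The symmetry relation on the tensor algebra, whose `RingQuot` is the
symmetric algebra `SymmAlg R M`. -/
inductive SymRel (R : Type*) [CommRing R] (M : Type*) [AddCommGroup M] [Module R M] :
    TensorAlgebra R M → TensorAlgebra R M → Prop
  | comm (x y : M) : SymRel R M (TensorAlgebra.ι R x * TensorAlgebra.ι R y)
      (TensorAlgebra.ι R y * TensorAlgebra.ι R x)

/-- The symmetric algebra `Sym(M)` of a module, realised as the quotient of the
tensor algebra by the symmetry relation. -/
abbrev SymmAlg (R : Type*) [CommRing R] (M : Type*) [AddCommGroup M] [Module R M] :=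
  RingQuot (SymRel R M)

/-- The canonical linear map `M → Sym(M)`. -/
def symι (R : Type*) [CommRing R] (M : Type*) [AddCommGroup M] [Module R M] :
    M →ₗ[R] SymmAlg R M :=
  (RingQuot.mkAlgHom R (SymRel R M)).toLinearMap ∘ₗ TensorAlgebra.ι R

section Aux
variable {R : Type*} [CommRing R] {M : Type*} [AddCommGroup M] [Module R M]

theorem symmAlg_ι_comm (m : M) (b : SymmAlg R M) :
    Commute (symι R M m) b := by
  obtain ⟨y, rfl⟩ := RingQuot.mkAlgHom_surjective R (SymRel R M) b
  induction y using TensorAlgebra.induction with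
  | algebraMap r => rw [AlgHom.commutes]; exact (Algebra.commutes r _).symm
  | ι m' =>
      have := RingQuot.mkAlgHom_rel R (SymRel.comm (R:=R) (M:=M) m m')
      rw [map_mul, map_mul] at this
      exact this
  | mul a b ha hb => rw [map_mul]; exact ha.mul_right hb
  | add a b ha hb => rw [map_add]; exact ha.add_right hb

theorem symmAlg_mul_comm (a b : SymmAlg R M) : a * b = b * a := by
  obtain ⟨x, rfl⟩ := RingQuot.mkAlgHom_surjective R (SymRel R M) a
  induction x using TensorAlgebra.induction with
  | algebraMap r => rw [AlgHom.commutes]; exact Algebra.commutes r b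
  | ι m => exact symmAlg_ι_comm m b
  | mul x y hx hy => rw [map_mul, mul_assoc, hy, ← mul_assoc, hx, mul_assoc]
  | add x y hx hy => rw [map_add, add_mul, hx, hy, mul_add]

instance symmAlgCommRing : CommRing (SymmAlg R M) :=
  { (inferInstance : Ring (SymmAlg R M)) with mul_comm := symmAlg_mul_comm }

theorem symι_eq_mk (x : M) :
    symι R M x = RingQuot.mkAlgHom R (SymRel R M) (TensorAlgebra.ι R x) := rfl
end Aux

/-- existence and uniqueness of the twisted-derivation operator
`D_s` on `Sym(h)` attached to a complex reflection `s`. -/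
theorem twisted_derivation_exists_unique
    {h : Type*} [AddCommGroup h] [Module ℂ h] [FiniteDimensional ℂ h]
    -- `s` is a complex reflection:
    (s : h ≃ₗ[ℂ] h) (hord : IsOfFinOrder s)
    (hhyper : Module.finrank ℂ ↥(LinearMap.ker (s.toLinearMap - LinearMap.id)) + 1 =
      Module.finrank ℂ h)
    -- eigenvector `α` of `s` with eigenvalue `ζ ≠ 1`; set `λ_s = 1 - ζ`:
    (α : h) (ζ : ℂ) (hα0 : α ≠ 0) (hζ : ζ ≠ 1) (hα : s α = ζ • α)
    -- dual eigenvector `αv` of the contragredient action, eigenvalue `η ≠ 1`: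
    (αv : Module.Dual ℂ h) (η : ℂ) (hαv0 : αv ≠ 0) (hη : η ≠ 1)
    (hαv : ∀ v : h, αv (s.symm v) = η * αv v)
    (hpair : αv α ≠ 0) :
    ∃! D : SymmAlg ℂ h →ₗ[ℂ] SymmAlg ℂ h,
      D 1 = 0 ∧
      (∀ x : h, D (symι ℂ h x) = αv x • 1) ∧
      (∀ p q : SymmAlg ℂ h,
        D (p * q) = D p * q + p * D q - ((1 - ζ) / αv α) • (D p * D q * symι ℂ h α)) := by
  set c : ℂ := (1 - ζ) / αv α with hc
  -- αv vanishes on the fixed hyperplane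
  have hker0 : ∀ v : h, s v = v → αv v = 0 := by
    intro v hv
    have h1 : s.symm v = v := by
      conv_lhs => rw [← hv]
      exact s.symm_apply_apply v
    have h2 := hαv v
    rw [h1] at h2
    have h3 : (1 - η) * αv v = 0 := by linear_combination h2
    rcases mul_eq_zero.1 h3 with h4 | h4
    · exact absurd (by linear_combination -h4 : η = (1:ℂ)) hη
    · exact h4
  -- the reflection formula
  have hs : ∀ x : h, s x = x - (c * αv x) • α := by
    set K := LinearMap.ker (s.toLinearMap - LinearMap.id) with hK
    have hαK : α ∉ K := by
      intro hmem
      have : s α = α := by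
        have := LinearMap.mem_ker.1 hmem
        rw [LinearMap.sub_apply, LinearMap.id_apply, sub_eq_zero] at this
        exact this
      rw [hα] at this
      have : (ζ - 1) • α = 0 := by rw [sub_smul, one_smul, this, sub_self]
      rcases smul_eq_zero.1 this with h4 | h4
      · exact hζ (by linear_combination h4)
      · exact hα0 h4
    have hsup : K ⊔ Submodule.span ℂ {α} = ⊤ := by
      have hlt : K < K ⊔ Submodule.span ℂ {α} := by
        refine lt_of_le_of_ne le_sup_left (fun hEq => hαK ?_)
        rw [hEq]
        exact Submodule.mem_sup_right (Submodule.mem_span_singleton_self α)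
      apply Submodule.eq_top_of_finrank_eq
      have h1 := Submodule.finrank_lt_finrank_of_lt hlt
      have h2 := Submodule.finrank_le (K ⊔ Submodule.span ℂ {α})
      omega
    intro x
    have hx : x ∈ K ⊔ Submodule.span ℂ {α} := hsup ▸ Submodule.mem_top
    obtain ⟨y, hy, z, hz, rfl⟩ := Submodule.mem_sup.1 hx
    obtain ⟨t, rfl⟩ := Submodule.mem_span_singleton.1 hz
    have hsy : s y = y := by
      have := LinearMap.mem_ker.1 hy
      rw [LinearMap.sub_apply, LinearMap.id_apply, sub_eq_zero] at this
      exact this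
    have hαvy : αv y = 0 := hker0 y hsy
    have hcoef : c * αv (y + t • α) = t * (1 - ζ) := by
      rw [map_add, map_smul, hαvy, smul_eq_mul, hc]
      field_simp
      ring
    rw [hcoef, map_add, map_smul, hsy, hα, smul_smul]
    module
  have hsι : ∀ x : h, symι ℂ h (s x) = symι ℂ h x - (c * αv x) • symι ℂ h α := by
    intro x; rw [hs x, map_sub, map_smul]
  -- the 2×2-matrix representation
  let φ : h →ₗ[ℂ] Matrix (Fin 2) (Fin 2) (SymmAlg ℂ h) :=
    { toFun := fun x =>
        Matrix.of ![![symι ℂ h (s x), algebraMap ℂ (SymmAlg ℂ h) (αv x)], ![0, symι ℂ h x]]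
      map_add' := by
        intro x y
        ext i j
        fin_cases i <;> fin_cases j <;>
          simp [Matrix.add_apply, map_add]
      map_smul' := by
        intro r x
        ext i j
        fin_cases i <;> fin_cases j <;>
          simp [Matrix.smul_apply, map_smul, Algebra.smul_def, map_mul] }
  have hφ00 : ∀ x : h, φ x 0 0 = symι ℂ h (s x) := fun _ => rfl
  have hφ01 : ∀ x : h, φ x 0 1 = algebraMap ℂ (SymmAlg ℂ h) (αv x) := fun _ => rfl
  have hφ10 : ∀ x : h, φ x 1 0 = 0 := fun _ => rfl
  have hφ11 : ∀ x : h, φ x 1 1 = symι ℂ h x := fun _ => rfl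
  have hφcomm : ∀ x y : h, φ x * φ y = φ y * φ x := by
    intro x y
    ext i j
    fin_cases i <;> fin_cases j <;>
      · simp only [Matrix.mul_apply, Fin.sum_univ_two, Fin.zero_eta, Fin.mk_one,
          hφ00, hφ01, hφ10, hφ11, hsι, Algebra.smul_def, map_mul]
        ring
  let F : TensorAlgebra ℂ h →ₐ[ℂ] Matrix (Fin 2) (Fin 2) (SymmAlg ℂ h) :=
    TensorAlgebra.lift ℂ φ
  have hFrel : ∀ ⦃a b : TensorAlgebra ℂ h⦄, SymRel ℂ h a b → F a = F b := by
    intro a b hab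
    rcases hab with ⟨x, y⟩
    rw [map_mul, map_mul, TensorAlgebra.lift_ι_apply, TensorAlgebra.lift_ι_apply]
    exact hφcomm x y
  let Φ : SymmAlg ℂ h →ₐ[ℂ] Matrix (Fin 2) (Fin 2) (SymmAlg ℂ h) :=
    RingQuot.liftAlgHom ℂ ⟨F, hFrel⟩
  have hΦmk : ∀ q : TensorAlgebra ℂ h,
      Φ (RingQuot.mkAlgHom ℂ (SymRel ℂ h) q) = F q := fun q =>
    RingQuot.liftAlgHom_mkAlgHom_apply ℂ _ _ _
  -- the operator D : entry (0,1) of Φ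
  let E : Matrix (Fin 2) (Fin 2) (SymmAlg ℂ h) →ₗ[ℂ] SymmAlg ℂ h :=
    { toFun := fun m => m 0 1
      map_add' := fun _ _ => rfl
      map_smul' := fun _ _ => rfl }
  let D : SymmAlg ℂ h →ₗ[ℂ] SymmAlg ℂ h := E ∘ₗ Φ.toLinearMap
  have hD : ∀ p : SymmAlg ℂ h, D p = Φ p 0 1 := fun _ => rfl
  -- key structural invariant
  have key : ∀ p : SymmAlg ℂ h,
      Φ p 1 0 = 0 ∧ Φ p 1 1 = p ∧ Φ p 0 0 = p - c • (Φ p 0 1 * symι ℂ h α) := by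
    intro p
    obtain ⟨q, rfl⟩ := RingQuot.mkAlgHom_surjective ℂ (SymRel ℂ h) p
    induction q using TensorAlgebra.induction with
    | algebraMap r =>
        rw [AlgHom.commutes, AlgHom.commutes]
        refine ⟨?_, ?_, ?_⟩
        · simp [Matrix.algebraMap_matrix_apply]
        · simp [Matrix.algebraMap_matrix_apply]
        · simp [Matrix.algebraMap_matrix_apply]
    | ι x =>
        rw [hΦmk, TensorAlgebra.lift_ι_apply]
        refine ⟨hφ10 x, hφ11 x, ?_⟩
        rw [hφ00, hφ01, ← symι_eq_mk, hsι x]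
        simp only [Algebra.smul_def, map_mul]
        ring
    | mul a b ha hb =>
        rw [map_mul, map_mul]
        obtain ⟨ha1, ha2, ha3⟩ := ha
        obtain ⟨hb1, hb2, hb3⟩ := hb
        refine ⟨?_, ?_, ?_⟩ <;>
          rw [Matrix.mul_apply, Fin.sum_univ_two]
        · rw [ha1, hb1]; ring
        · rw [ha1, ha2, hb2]; ring
        · rw [Matrix.mul_apply, Fin.sum_univ_two, hb1, hb2, ha3, hb3]
          simp only [Algebra.smul_def]
          ring
    | add a b ha hb =>
        rw [map_add, map_add]
        obtain ⟨ha1, ha2, ha3⟩ := ha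
        obtain ⟨hb1, hb2, hb3⟩ := hb
        refine ⟨?_, ?_, ?_⟩ <;> rw [Matrix.add_apply]
        · rw [ha1, hb1, add_zero]
        · rw [ha2, hb2]
        · rw [Matrix.add_apply, ha3, hb3]
          simp only [Algebra.smul_def]
          ring
  -- the three defining properties of D
  have hD1 : D 1 = 0 := by
    rw [hD, map_one, Matrix.one_apply_ne (by decide : (0 : Fin 2) ≠ 1)]
  have hD2 : ∀ x : h, D (symι ℂ h x) = αv x • 1 := by
    intro x
    rw [hD, symι_eq_mk, hΦmk, TensorAlgebra.lift_ι_apply, hφ01,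
      Algebra.algebraMap_eq_smul_one]
  have hD3 : ∀ p q : SymmAlg ℂ h,
      D (p * q) = D p * q + p * D q - c • (D p * D q * symι ℂ h α) := by
    intro p q
    rw [hD, hD, hD, map_mul, Matrix.mul_apply, Fin.sum_univ_two,
      (key p).2.2, (key q).2.1]
    simp only [Algebra.smul_def]
    ring
  refine ⟨D, ⟨hD1, hD2, hD3⟩, ?_⟩
  rintro D' ⟨hD'1, hD'2, hD'3⟩
  apply LinearMap.ext
  intro p
  obtain ⟨q, rfl⟩ := RingQuot.mkAlgHom_surjective ℂ (SymRel ℂ h) p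
  induction q using TensorAlgebra.induction with
  | algebraMap r =>
      rw [AlgHom.commutes, Algebra.algebraMap_eq_smul_one, map_smul, map_smul, hD1, hD'1]
  | ι x => rw [← symι_eq_mk, hD2 x, hD'2 x]
  | mul a b ha hb => rw [map_mul, hD3, hD'3, ha, hb]
  | add a b ha hb => rw [map_add, map_add, map_add, ha, hb]
end
end

section
/- Let W ⊂ GL(h) be a finite subgroup which is generated by the set S of complex reflections it contains, and for each s ∈ S let D_s be the associated operator on Sym(h). Then an element p ∈ Sym(h) is W-invariant (i.e., w(p) = p for all w ∈ W, for the induced action of W on Sym(h)) if and only if D_s(p) = 0 for every complex reflection s ∈ S. -/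
/-!
The twisted Leibniz rule for `D_s` says exactly that `q ↦ q - c • (D_s q * α_s)`, with
`c = λ_s / α_s^∨(α_s)`, is an algebra endomorphism of `Sym(h)`. On `h` it agrees with `s`,
because `s` fixes the hyperplane `ker α_s^∨` pointwise, so `s x = x - c α_s^∨(x) α_s`. Hence `s`
acts on `Sym(h)` as `1 - c α_s D_s`, and since `Sym(h)` is a domain, `s p = p` iff `D_s p = 0`.
As the reflections generate `W`, being fixed by every `s ∈ S` is the same as `W`-invariance.
-/

noncomputable section

/-- A complex reflection on `h`: an element of `GL(h)` of finite order whose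
fixed subspace is a hyperplane (has codimension one). -/
def IsComplexReflection {h : Type*} [AddCommGroup h] [Module ℂ h] (s : h ≃ₗ[ℂ] h) : Prop :=
  IsOfFinOrder s ∧
    Module.finrank ℂ ↥(LinearMap.ker (s.toLinearMap - LinearMap.id)) + 1 =
      Module.finrank ℂ h

theorem SymmetricAlgebra.ι_injective {R M : Type*} [CommRing R] [AddCommGroup M] [Module R M] :
    Function.Injective (SymmetricAlgebra.ι R M) := by
  let : Module Rᵐᵒᵖ M := Module.compHom _ ((RingHom.id R).fromOpposite mul_comm)
  have : IsCentralScalar R M := ⟨fun _ _ => rfl⟩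
  refine Function.LeftInverse.injective
    (g := TrivSqZeroExt.snd ∘ SymmetricAlgebra.lift (TrivSqZeroExt.inrHom R M)) fun x => ?_
  simp

namespace SymmAlg

variable {R M : Type*} [CommRing R] [AddCommGroup M] [Module R M]

theorem commute_symι (x y : M) : Commute (symι R M x) (symι R M y) := by
  simp only [Commute, SemiconjBy, symι, LinearMap.coe_comp, Function.comp_apply,
    AlgHom.toLinearMap_apply, ← map_mul]
  exact RingQuot.mkAlgHom_rel R (SymRel.comm x y)

theorem commute_mkAlgHom (a b : TensorAlgebra R M) :
    Commute (RingQuot.mkAlgHom R (SymRel R M) a) (RingQuot.mkAlgHom R (SymRel R M) b) := by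
  induction b using TensorAlgebra.induction with
  | algebraMap r => rw [AlgHom.commutes]; exact Algebra.commute_algebraMap_right _ _
  | ι y =>
    induction a using TensorAlgebra.induction with
    | algebraMap r => rw [AlgHom.commutes]; exact Algebra.commute_algebraMap_left _ _
    | ι x => exact commute_symι x y
    | mul a₁ a₂ h₁ h₂ => rw [map_mul]; exact h₁.mul_left h₂
    | add a₁ a₂ h₁ h₂ => rw [map_add]; exact h₁.add_left h₂
  | mul b₁ b₂ h₁ h₂ => rw [map_mul]; exact h₁.mul_right h₂
  | add b₁ b₂ h₁ h₂ => rw [map_add]; exact h₁.add_right h₂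

instance : CommRing (SymmAlg R M) where
  mul_comm a b := by
    obtain ⟨a, rfl⟩ := RingQuot.mkAlgHom_surjective R (SymRel R M) a
    obtain ⟨b, rfl⟩ := RingQuot.mkAlgHom_surjective R (SymRel R M) b
    exact (commute_mkAlgHom a b).eq

theorem hom_ext {A : Type*} [Semiring A] [Algebra R A] {f g : SymmAlg R M →ₐ[R] A}
    (w : ∀ x : M, f (symι R M x) = g (symι R M x)) : f = g :=
  RingQuot.ringQuot_ext' _ _ _ <| TensorAlgebra.hom_ext <| LinearMap.ext w

def equivSymmetricAlgebra : SymmAlg R M ≃ₐ[R] SymmetricAlgebra R M :=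
  AlgEquiv.ofAlgHom
    (RingQuot.liftAlgHom R ⟨TensorAlgebra.lift R (SymmetricAlgebra.ι R M), by
      rintro _ _ ⟨x, y⟩
      simp only [map_mul, TensorAlgebra.lift_ι_apply, mul_comm]⟩)
    (SymmetricAlgebra.lift (symι R M))
    (SymmetricAlgebra.algHom_ext <| LinearMap.ext fun x => by simp [symι])
    (hom_ext fun x => by simp [symι])

@[simp]
theorem equivSymmetricAlgebra_symι (x : M) :
    equivSymmetricAlgebra (symι R M x) = SymmetricAlgebra.ι R M x := by
  simp [equivSymmetricAlgebra, symι]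

instance [NoZeroDivisors R] [Module.Free R M] : NoZeroDivisors (SymmAlg R M) :=
  equivSymmetricAlgebra.toMulEquiv.noZeroDivisors

theorem symι_injective : Function.Injective (symι R M) := fun x y hxy =>
  SymmetricAlgebra.ι_injective (R := R) <| by
    rw [← equivSymmetricAlgebra_symι, hxy, equivSymmetricAlgebra_symι]

end SymmAlg

section TwistedDerivation

variable {R A : Type*} [CommRing R] [CommRing A] [Algebra R A]

def IsTwistedDerivation (D : A →ₗ[R] A) (c : R) (a : A) : Prop :=
  D 1 = 0 ∧ ∀ p q, D (p * q) = D p * q + p * D q - c • (D p * D q * a)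

namespace IsTwistedDerivation

variable {D : A →ₗ[R] A} {c : R} {a : A}

def toAlgHom (hD : IsTwistedDerivation D c a) : A →ₐ[R] A :=
  AlgHom.ofLinearMap (LinearMap.id - c • (LinearMap.mulRight R a ∘ₗ D))
    (by simp [hD.1])
    (fun p q => by
      change p * q - c • (D (p * q) * a) = (p - c • (D p * a)) * (q - c • (D q * a))
      rw [hD.2]
      simp only [Algebra.smul_def]
      ring)

theorem toAlgHom_apply (hD : IsTwistedDerivation D c a) (q : A) :
    hD.toAlgHom q = q - c • (D q * a) :=
  rfl

theorem toAlgHom_apply_eq_self_iff [IsDomain R] [NoZeroDivisors A] [Module.IsTorsionFree R A]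
    (hD : IsTwistedDerivation D c a) (hc : c ≠ 0) (ha : a ≠ 0) (q : A) :
    hD.toAlgHom q = q ↔ D q = 0 := by
  rw [toAlgHom_apply, sub_eq_self, smul_eq_zero, mul_eq_zero]
  simp [hc, ha]

end IsTwistedDerivation

end TwistedDerivation

theorem SymmAlg.eq_toAlgHom_of_apply_symι {R M : Type*} [CommRing R] [AddCommGroup M]
    [Module R M] {s : M →ₗ[R] M} {c : R} {a : M} {f : Module.Dual R M}
    (hs : ∀ x, s x = x - (c * f x) • a) {D : SymmAlg R M →ₗ[R] SymmAlg R M}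
    (hD : IsTwistedDerivation D c (symι R M a)) (hDι : ∀ x, D (symι R M x) = f x • 1)
    {φ : SymmAlg R M →ₐ[R] SymmAlg R M} (hφ : ∀ x, φ (symι R M x) = symι R M (s x)) :
    φ = hD.toAlgHom :=
  SymmAlg.hom_ext fun x => by
    rw [hφ, hs, hD.toAlgHom_apply, hDι, map_sub, map_smul, smul_mul_assoc, one_mul, smul_smul]

theorem LinearMap.apply_eq_sub_smul_of_ker_le {K V : Type*} [Field K] [AddCommGroup V]
    [Module K V] {s : V →ₗ[K] V} {f : Module.Dual K V}
    (hker : LinearMap.ker f ≤ LinearMap.ker (s - LinearMap.id)) {a : V} {z : K}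
    (hsa : s a = z • a) (hfa : f a ≠ 0) (x : V) :
    s x = x - ((1 - z) / f a * f x) • a := by
  set y := x - (f x / f a) • a
  have hy : s y = y := by
    have hfy : y ∈ LinearMap.ker f := by
      simp [y, div_mul_cancel₀ _ hfa]
    simpa [sub_eq_zero] using hker hfy
  calc s x = s (y + (f x / f a) • a) := by simp [y]
    _ = x - ((1 - z) / f a * f x) • a := by
      rw [map_add, hy, map_smul, hsa, smul_smul]
      match_scalars
      · ring
      · field_simp
        ring

theorem IsComplexReflection.ker_sub_id_eq_ker {V : Type*} [AddCommGroup V] [Module ℂ V]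
    [FiniteDimensional ℂ V] {s : V ≃ₗ[ℂ] V} (hs : IsComplexReflection s)
    {f : Module.Dual ℂ V} {η : ℂ} (hη : η ≠ 1) (hfs : ∀ v, f (s.symm v) = η * f v)
    (hf : f ≠ 0) : LinearMap.ker (s.toLinearMap - LinearMap.id) = LinearMap.ker f := by
  refine Submodule.eq_of_le_of_finrank_eq (fun v hv => ?_) ?_
  · have hsv : s v = v := by simpa [sub_eq_zero] using hv
    have hfv : f v = η * f v := by
      have := hfs (s v)
      rwa [LinearEquiv.symm_apply_apply, hsv] at this
    have : (1 - η) * f v = 0 := by rw [sub_mul, one_mul, ← hfv, sub_self]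
    exact (mul_eq_zero.mp this).resolve_left (sub_ne_zero.mpr hη.symm)
  · have := hs.2
    have := f.finrank_ker_add_one_of_ne_zero hf
    omega

theorem Subgroup.apply_eq_self_of_forall_mem_closure {G R A : Type*} [Group G] [CommSemiring R]
    [Semiring A] [Algebra R A] {S : Set G} (ρ : Subgroup.closure S →* (A →ₐ[R] A)) {p : A}
    (hp : ∀ g (hg : g ∈ S), ρ ⟨g, Subgroup.subset_closure hg⟩ p = p)
    (g : Subgroup.closure S) : ρ g p = p := by
  obtain ⟨g, hg⟩ := g
  induction hg using Subgroup.closure_induction with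
  | mem g hg => exact hp g hg
  | one => exact congrArg (· p) (map_one ρ)
  | mul g g' hg hg' h h' =>
    rw [show (⟨g * g', _⟩ : Subgroup.closure S) = ⟨g, hg⟩ * ⟨g', hg'⟩ from rfl, map_mul,
      AlgHom.mul_apply, h', h]
  | inv g hg h =>
    calc ρ ⟨g, hg⟩⁻¹ p = ρ ⟨g, hg⟩⁻¹ (ρ ⟨g, hg⟩ p) := by rw [h]
      _ = p := by rw [← AlgHom.mul_apply, ← map_mul, inv_mul_cancel, map_one, AlgHom.one_apply]

theorem invariant_iff_all_twisted_derivations_zero_general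
    {h : Type*} [AddCommGroup h] [Module ℂ h] [FiniteDimensional ℂ h]
    -- `W` is a finite subgroup of `GL(h)` generated by the set `S` of complex
    -- reflections it contains:
    (W : Subgroup (h ≃ₗ[ℂ] h))
    (S : Set (h ≃ₗ[ℂ] h))
    (hS : S = {s : h ≃ₗ[ℂ] h | s ∈ W ∧ IsComplexReflection s})
    (hgen : Subgroup.closure S = W)
    -- for each `s ∈ S`: eigenvector `α s` of eigenvalue `ζ s ≠ 1`, and dual
    -- eigenvector `αv s` of the contragredient action of eigenvalue `η s ≠ 1`:
    (α : (h ≃ₗ[ℂ] h) → h) (ζ : (h ≃ₗ[ℂ] h) → ℂ)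
    (αv : (h ≃ₗ[ℂ] h) → Module.Dual ℂ h) (η : (h ≃ₗ[ℂ] h) → ℂ)
    (hα : ∀ s ∈ S, α s ≠ 0 ∧ ζ s ≠ 1 ∧ s (α s) = ζ s • α s)
    (hαv : ∀ s ∈ S, αv s ≠ 0 ∧ η s ≠ 1 ∧ (∀ v : h, αv s (s.symm v) = η s * αv s v))
    (hpair : ∀ s ∈ S, αv s (α s) ≠ 0)
    -- for each `s ∈ S`, `D s` is the twisted-derivation operator attached to `s`:
    (D : (h ≃ₗ[ℂ] h) → (SymmAlg ℂ h →ₗ[ℂ] SymmAlg ℂ h))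
    (hD1 : ∀ s ∈ S, D s 1 = 0)
    (hDι : ∀ s ∈ S, ∀ x : h, D s (symι ℂ h x) = αv s x • 1)
    (hDmul : ∀ s ∈ S, ∀ p q : SymmAlg ℂ h,
      D s (p * q) =
        D s p * q + p * D s q - ((1 - ζ s) / αv s (α s)) • (D s p * D s q * symι ℂ h (α s)))
    -- `act w` is the algebra automorphism of `Sym(h)` induced by `w ∈ W`:
    (act : ↥W → (SymmAlg ℂ h →ₐ[ℂ] SymmAlg ℂ h))
    (hact : ∀ (w : ↥W) (x : h), act w (symι ℂ h x) = symι ℂ h ((w : h ≃ₗ[ℂ] h) x)) :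
    ∀ p : SymmAlg ℂ h, (∀ w : ↥W, act w p = p) ↔ (∀ s ∈ S, D s p = 0) := by
  intro p
  have hfix : ∀ s (hs : s ∈ S) (hsW : s ∈ W), act ⟨s, hsW⟩ p = p ↔ D s p = 0 := by
    intro s hs hsW
    obtain ⟨hα0, hζ, hsα⟩ := hα s hs
    obtain ⟨hαv0, hη, hαvs⟩ := hαv s hs
    have hrefl : IsComplexReflection s := (hS ▸ hs : s ∈ {s | s ∈ W ∧ IsComplexReflection s}).2
    have hker := hrefl.ker_sub_id_eq_ker hη hαvs hαv0
    have hD : IsTwistedDerivation (D s) _ (symι ℂ h (α s)) := ⟨hD1 s hs, hDmul s hs⟩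
    rw [SymmAlg.eq_toAlgHom_of_apply_symι (φ := act ⟨s, hsW⟩)
      (LinearMap.apply_eq_sub_smul_of_ker_le hker.ge hsα (hpair s hs)) hD (hDι s hs) (hact _)]
    exact hD.toAlgHom_apply_eq_self_iff (div_ne_zero (sub_ne_zero.mpr hζ.symm) (hpair s hs))
      ((map_ne_zero_iff _ SymmAlg.symι_injective).mpr hα0) p
  have hSW : S ⊆ W := hgen ▸ Subgroup.subset_closure
  refine ⟨fun hinv s hs => (hfix s hs (hSW hs)).1 (hinv _), fun hD => ?_⟩
  subst hgen
  let ρ : Subgroup.closure S →* (SymmAlg ℂ h →ₐ[ℂ] SymmAlg ℂ h) :=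
    { toFun := act
      map_one' := SymmAlg.hom_ext fun x => by simp [hact]
      map_mul' := fun u v => SymmAlg.hom_ext fun x => by simp [hact] }
  exact Subgroup.apply_eq_self_of_forall_mem_closure ρ fun s hs => (hfix s hs _).2 (hD s hs)

/-- for a finite complex reflection group `W ⊆ GL(h)`, an element
of `Sym(h)` is `W`-invariant if and only if it is killed by every operator
`D_s`, `s` a complex reflection of `W`. -/
theorem invariant_iff_all_twisted_derivations_zero
    {h : Type*} [AddCommGroup h] [Module ℂ h] [FiniteDimensional ℂ h]
    -- `W` is a finite subgroup of `GL(h)` generated by the set `S` of complex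
    -- reflections it contains:
    (W : Subgroup (h ≃ₗ[ℂ] h)) [Finite ↥W]
    (S : Set (h ≃ₗ[ℂ] h))
    (hS : S = {s : h ≃ₗ[ℂ] h | s ∈ W ∧ IsComplexReflection s})
    (hgen : Subgroup.closure S = W)
    -- for each `s ∈ S`: eigenvector `α s` of eigenvalue `ζ s ≠ 1`, and dual
    -- eigenvector `αv s` of the contragredient action of eigenvalue `η s ≠ 1`:
    (α : (h ≃ₗ[ℂ] h) → h) (ζ : (h ≃ₗ[ℂ] h) → ℂ)
    (αv : (h ≃ₗ[ℂ] h) → Module.Dual ℂ h) (η : (h ≃ₗ[ℂ] h) → ℂ)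
    (hα : ∀ s ∈ S, α s ≠ 0 ∧ ζ s ≠ 1 ∧ s (α s) = ζ s • α s)
    (hαv : ∀ s ∈ S, αv s ≠ 0 ∧ η s ≠ 1 ∧ (∀ v : h, αv s (s.symm v) = η s * αv s v))
    (hpair : ∀ s ∈ S, αv s (α s) ≠ 0)
    -- for each `s ∈ S`, `D s` is the twisted-derivation operator attached to `s`:
    (D : (h ≃ₗ[ℂ] h) → (SymmAlg ℂ h →ₗ[ℂ] SymmAlg ℂ h))
    (hD1 : ∀ s ∈ S, D s 1 = 0)
    (hDι : ∀ s ∈ S, ∀ x : h, D s (symι ℂ h x) = αv s x • 1)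
    (hDmul : ∀ s ∈ S, ∀ p q : SymmAlg ℂ h,
      D s (p * q) =
        D s p * q + p * D s q - ((1 - ζ s) / αv s (α s)) • (D s p * D s q * symι ℂ h (α s)))
    -- `act w` is the algebra automorphism of `Sym(h)` induced by `w ∈ W`:
    (act : ↥W → (SymmAlg ℂ h →ₐ[ℂ] SymmAlg ℂ h))
    (hact : ∀ (w : ↥W) (x : h), act w (symι ℂ h x) = symι ℂ h ((w : h ≃ₗ[ℂ] h) x)) :
    ∀ p : SymmAlg ℂ h, (∀ w : ↥W, act w p = p) ↔ (∀ s ∈ S, D s p = 0) :=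
  invariant_iff_all_twisted_derivations_zero_general W S hS hgen α ζ αv η hα hαv hpair D hD1 hDι
    hDmul act hact
end
end
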